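/- arXiv:1807.07220 — 2 statements merged into one kernel-verified Lean document; each statement's English description precedes it below -/
import Mathlib

section
/- Let A be a symmetric positive definite real n×n matrix and B a real m×n matrix of rank m. Then the saddle-point matrix L = [[A, Bᵀ],[B, 0]] has exactly n positive eigenvalues and exactly m negative eigenvalues (counted with multiplicity). -/
/-!
If the quadratic form of a symmetric matrix `L` is positive definite on a `k`-dimensional
subspace, then `L` has at least `k` positive eigenvalues: otherwise that subspace would meet the
span of the eigenvectors with eigenvalue `≤ 0`, on which the form is nonpositive. For the
saddle-point matrix the form restricts to `A` on `ℝⁿ × {0}` and to minus the Schur complement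
`B A⁻¹ Bᵀ` on the graph of `y ↦ (-A⁻¹ Bᵀ y, y)`; the latter is positive definite because `B` has
full row rank. So there are at least `n` positive and at least `m` negative eigenvalues, out of
`n + m` in total.
-/

open Matrix Finset

section Inertia

variable {ι κ : Type*} [Fintype ι] [Fintype κ]

theorem card_le_card_filter_pos_of_forall_pos (Q : Matrix ι κ ℝ) (μ : ι → ℝ)
    (h : ∀ x ≠ 0, 0 < ∑ i, μ i * (Q *ᵥ x) i ^ 2) :
    Fintype.card κ ≤ #{i | 0 < μ i} := by
  classical
  set S : Finset ι := {i | 0 < μ i}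
  let φ : (κ → ℝ) →ₗ[ℝ] S → ℝ := LinearMap.funLeft ℝ ℝ Subtype.val ∘ₗ Q.mulVecLin
  have hφ : Function.Injective φ := by
    rw [← LinearMap.ker_eq_bot, LinearMap.ker_eq_bot']
    intro x hx
    by_contra hx0
    refine (h x hx0).not_ge (sum_nonpos fun i _ => ?_)
    by_cases hi : 0 < μ i
    · have : (Q *ᵥ x) i = 0 := congrFun hx ⟨i, by simpa [S] using hi⟩
      simp [this]
    · exact mul_nonpos_of_nonpos_of_nonneg (not_lt.mp hi) (sq_nonneg _)
  simpa using LinearMap.finrank_le_finrank_of_injective hφ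

theorem card_filter_pos_add_card_filter_neg_le (μ : ι → ℝ) :
    #{i | 0 < μ i} + #{i | μ i < 0} ≤ Fintype.card ι := by
  classical
  rw [← card_union_of_disjoint (disjoint_filter.2 fun i _ h => h.asymm)]
  exact card_le_univ _

variable [DecidableEq ι]

theorem Matrix.IsHermitian.dotProduct_mulVec_eq_sum_eigenvalues {L : Matrix ι ι ℝ}
    (hL : L.IsHermitian) (v : ι → ℝ) :
    v ⬝ᵥ (L *ᵥ v) =
      ∑ i, hL.eigenvalues i * (star (hL.eigenvectorUnitary : Matrix ι ι ℝ) *ᵥ v) i ^ 2 := by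
  set U : Matrix ι ι ℝ := ↑hL.eigenvectorUnitary
  have hU : star U = Uᵀ := conjTranspose_eq_transpose_of_trivial U
  conv_lhs => rw [hL.spectral_theorem, Unitary.conjStarAlgAut_apply]
  rw [← mulVec_mulVec, ← mulVec_mulVec, dotProduct_mulVec, hU, mulVec_transpose]
  simp only [dotProduct, mulVec_diagonal, Function.comp_apply, RCLike.ofReal_real_eq_id, id]
  exact sum_congr rfl fun i _ => by ring

theorem Matrix.IsHermitian.card_le_card_eigenvalues_pos {L : Matrix ι ι ℝ} (hL : L.IsHermitian)
    (P : Matrix ι κ ℝ) (hP : (Pᵀ * L * P).PosDef) :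
    Fintype.card κ ≤ #{i | 0 < hL.eigenvalues i} := by
  refine card_le_card_filter_pos_of_forall_pos (star (hL.eigenvectorUnitary : Matrix ι ι ℝ) * P)
    _ fun x hx => ?_
  rw [← mulVec_mulVec, ← hL.dotProduct_mulVec_eq_sum_eigenvalues]
  simpa [dotProduct_mulVec, vecMul_mulVec, Matrix.mul_assoc] using hP.dotProduct_mulVec_pos hx

theorem Matrix.IsHermitian.card_le_card_eigenvalues_neg {L : Matrix ι ι ℝ} (hL : L.IsHermitian)
    (P : Matrix ι κ ℝ) (hP : (-(Pᵀ * L * P)).PosDef) :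
    Fintype.card κ ≤ #{i | hL.eigenvalues i < 0} := by
  have := card_le_card_filter_pos_of_forall_pos
    (star (hL.eigenvectorUnitary : Matrix ι ι ℝ) * P) (-hL.eigenvalues) fun x hx => ?_
  · simpa using this
  rw [← mulVec_mulVec]
  simp only [Pi.neg_apply, neg_mul, sum_neg_distrib, ← hL.dotProduct_mulVec_eq_sum_eigenvalues]
  simpa [dotProduct_mulVec, vecMul_mulVec, Matrix.mul_assoc, vecMul_neg] using
    hP.dotProduct_mulVec_pos hx

end Inertia

section SaddlePoint

variable {α l m : Type*} [CommRing α] [Fintype l] [Fintype m]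

theorem vecMul_injective_of_rank_eq {K : Type*} [Field K] {B : Matrix m l K}
    (hB : B.rank = Fintype.card m) : Function.Injective B.vecMul := by
  rw [vecMul_injective_iff, linearIndependent_iff_card_eq_finrank_span, ← hB,
    rank_eq_finrank_span_row, Set.finrank]

variable [DecidableEq l]

theorem transpose_fromRows_one_zero_mul_fromBlocks_mul (A : Matrix l l α) (B : Matrix l m α)
    (C : Matrix m l α) (D : Matrix m m α) :
    (fromRows 1 0 : Matrix (l ⊕ m) l α)ᵀ * fromBlocks A B C D *
      (fromRows 1 0 : Matrix (l ⊕ m) l α) = A := by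
  rw [transpose_fromRows, fromCols_mul_fromBlocks, fromCols_mul_fromRows]
  simp

theorem transpose_fromRows_schur_mul_fromBlocks_mul [DecidableEq m] (A : Matrix l l α)
    [Invertible A] (B : Matrix l m α) (C : Matrix m l α) (D : Matrix m m α) :
    (fromRows (-(A⁻¹ * B)) 1 : Matrix (l ⊕ m) m α)ᵀ * fromBlocks A B C D *
      (fromRows (-(A⁻¹ * B)) 1 : Matrix (l ⊕ m) m α) = D - C * A⁻¹ * B := by
  rw [Matrix.mul_assoc, fromBlocks_mul_fromRows, transpose_fromRows, fromCols_mul_fromRows]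
  simp [Matrix.mul_assoc, sub_eq_neg_add]

end SaddlePoint

theorem saddle_point_matrix_eigenvalue_signs_general {n m : ℕ}
    (A : Matrix (Fin n) (Fin n) ℝ) (B : Matrix (Fin m) (Fin n) ℝ)
    (hA_pd : A.PosDef) (hB : B.rank = m)
    (hL : (Matrix.fromBlocks A Bᵀ B (0 : Matrix (Fin m) (Fin m) ℝ)).IsHermitian) :
    (Finset.univ.filter fun i => 0 < hL.eigenvalues i).card = n ∧
    (Finset.univ.filter fun i => hL.eigenvalues i < 0).card = m := by
  have : Invertible A := hA_pd.isUnit.invertible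
  have hpos : n ≤ #{i | 0 < hL.eigenvalues i} :=
    (Fintype.card_fin n).ge.trans <| hL.card_le_card_eigenvalues_pos _ <| by
      rwa [transpose_fromRows_one_zero_mul_fromBlocks_mul]
  have hschur : (B * A⁻¹ * Bᴴ).PosDef :=
    hA_pd.inv.mul_mul_conjTranspose_same (vecMul_injective_of_rank_eq (by simpa using hB))
  have hneg : m ≤ #{i | hL.eigenvalues i < 0} :=
    (Fintype.card_fin m).ge.trans <| hL.card_le_card_eigenvalues_neg _ <| by
      rwa [transpose_fromRows_schur_mul_fromBlocks_mul, zero_sub, neg_neg,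
        ← conjTranspose_eq_transpose_of_trivial]
  have htotal := card_filter_pos_add_card_filter_neg_le hL.eigenvalues
  rw [Fintype.card_sum, Fintype.card_fin, Fintype.card_fin] at htotal
  constructor <;> omega

/-- If `A` is a symmetric positive definite real `n × n` matrix and `B` is a real `m × n`
matrix of rank `m`, then the saddle-point matrix `L = [[A, Bᵀ],[B, 0]]` (which is real
symmetric, hence has real eigenvalues) has exactly `n` positive eigenvalues and exactly
`m` negative eigenvalues, counted with multiplicity. -/
theorem saddle_point_matrix_eigenvalue_signs {n m : ℕ}
    (A : Matrix (Fin n) (Fin n) ℝ) (B : Matrix (Fin m) (Fin n) ℝ)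
    (hA_symm : A.IsSymm) (hA_pd : A.PosDef) (hB : B.rank = m)
    (hL : (Matrix.fromBlocks A Bᵀ B (0 : Matrix (Fin m) (Fin m) ℝ)).IsHermitian) :
    (Finset.univ.filter fun i => 0 < hL.eigenvalues i).card = n ∧
    (Finset.univ.filter fun i => hL.eigenvalues i < 0).card = m :=
  saddle_point_matrix_eigenvalue_signs_general A B hA_pd hB hL
end

section
/- Let A be a symmetric positive definite real n×n matrix, B a real m×n matrix, F ∈ ℝ^m, and v̄ ∈ ℝ^n an arbitrary vector. For i = 1, …, N let Π_{v,i} be a real n_i×n matrix and Π_{p,i} a real m_i×m matrix, and assume: (i) the local saddle-point matrices L_i = [[Π_{v,i} A Π_{v,i}ᵀ, Π_{v,i} Bᵀ Π_{p,i}ᵀ],[Π_{p,i} B Π_{v,i}ᵀ, 0]] are invertible; (ii) the pressure restrictions form a partition of unity: Σ_{i=1}^N Π_{p,i}ᵀ Π_{p,i} = I_m; (iii) locality holds: B Π_{v,i}ᵀ = Π_{p,i}ᵀ Π_{p,i} B Π_{v,i}ᵀ for each i. Define (u_i, q_i) = L_i^{-1}(Π_{v,i}(−A v̄), Π_{p,i}(F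 − B v̄)) and v̄_i = Π_{v,i}ᵀ u_i. Then B (v̄ + v̄_1 + ⋯ + v̄_N) = F. -/
/-!
The second block row of the local saddle-point system says that the local flux `Pp i B (Pv i)ᵀ u_i`
matches the local residual `Pp i (F - B v̄)`. By locality, `B (Pv i)ᵀ u_i` is supported in block `i`,
so it equals `(Pp i)ᵀ Pp i (F - B v̄)`; summing over `i` and using the partition of unity recovers
the full residual `F - B v̄`.
-/

open Matrix

namespace Matrix

variable {R : Type*} [CommRing R]

theorem mulVec_nonsing_inv_mulVec {k : Type*} [Fintype k] [DecidableEq k] {L : Matrix k k R}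
    (hL : IsUnit L) (b : k → R) : L *ᵥ (L⁻¹ *ᵥ b) = b := by
  rw [mulVec_mulVec, mul_nonsing_inv L ((isUnit_iff_isUnit_det L).mp hL), one_mulVec]

theorem fromBlocks_zero₂₂_inv_mulVec_inl {k l : Type*} [Fintype k] [Fintype l] [DecidableEq k]
    [DecidableEq l] (P : Matrix k k R) (Q : Matrix k l R) (C : Matrix l k R)
    (hL : IsUnit (fromBlocks P Q C 0)) (f : k → R) (g : l → R) :
    C *ᵥ (((fromBlocks P Q C 0)⁻¹ *ᵥ Sum.elim f g) ∘ Sum.inl) = g := by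
  have hsolve := mulVec_nonsing_inv_mulVec hL (Sum.elim f g)
  rw [fromBlocks_mulVec] at hsolve
  simpa using congrArg (· ∘ Sum.inr) hsolve

theorem mulVec_mulVec_eq_of_local {n m k l : Type*} [Fintype n] [Fintype m] [Fintype k]
    [Fintype l] {B : Matrix m n R} {E : Matrix n k R} {S : Matrix m l R} {P : Matrix l m R}
    (hloc : B * E = S * P * (B * E)) {u : k → R} {r : m → R} (hu : (P * B * E) *ᵥ u = P *ᵥ r) :
    B *ᵥ (E *ᵥ u) = (S * P) *ᵥ r :=
  calc B *ᵥ (E *ᵥ u) = (S * P * (B * E)) *ᵥ u := by rw [mulVec_mulVec, ← hloc]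
    _ = S *ᵥ ((P * B * E) *ᵥ u) := by simp only [mulVec_mulVec, Matrix.mul_assoc]
    _ = (S * P) *ᵥ r := by rw [hu, mulVec_mulVec]

end Matrix

theorem preprocessing_flux_exact_general {n m N : ℕ}
    (A : Matrix (Fin n) (Fin n) ℝ) (B : Matrix (Fin m) (Fin n) ℝ)
    (F : Fin m → ℝ) (vbar : Fin n → ℝ)
    (ni mi : Fin N → ℕ)
    (Pv : ∀ i, Matrix (Fin (ni i)) (Fin n) ℝ)
    (Pp : ∀ i, Matrix (Fin (mi i)) (Fin m) ℝ)
    (L : ∀ i, Matrix (Fin (ni i) ⊕ Fin (mi i)) (Fin (ni i) ⊕ Fin (mi i)) ℝ)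
    (hL : ∀ i, L i = Matrix.fromBlocks (Pv i * A * (Pv i)ᵀ) (Pv i * Bᵀ * (Pp i)ᵀ)
      (Pp i * B * (Pv i)ᵀ) (0 : Matrix (Fin (mi i)) (Fin (mi i)) ℝ))
    (hinv : ∀ i, IsUnit (L i))
    (hpart : ∑ i, (Pp i)ᵀ * Pp i = (1 : Matrix (Fin m) (Fin m) ℝ))
    (hloc : ∀ i, B * (Pv i)ᵀ = (Pp i)ᵀ * Pp i * (B * (Pv i)ᵀ))
    (u : ∀ i, Fin (ni i) → ℝ)
    (hu : ∀ i, u i = fun j =>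
      ((L i)⁻¹ *ᵥ Sum.elim (Pv i *ᵥ (-(A *ᵥ vbar))) (Pp i *ᵥ (F - B *ᵥ vbar))) (Sum.inl j)) :
    B *ᵥ (vbar + ∑ i, (Pv i)ᵀ *ᵥ u i) = F := by
  have hlocal_flux : ∀ i, (Pp i * B * (Pv i)ᵀ) *ᵥ u i = Pp i *ᵥ (F - B *ᵥ vbar) := fun i => by
    rw [hu i, hL i]
    exact fromBlocks_zero₂₂_inv_mulVec_inl _ _ _ (hL i ▸ hinv i) _ _
  calc B *ᵥ (vbar + ∑ i, (Pv i)ᵀ *ᵥ u i)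
        = B *ᵥ vbar + ∑ i, ((Pp i)ᵀ * Pp i) *ᵥ (F - B *ᵥ vbar) := by
          simp only [mulVec_add, mulVec_sum, mulVec_mulVec_eq_of_local (hloc _) (hlocal_flux _)]
    _ = B *ᵥ vbar + (F - B *ᵥ vbar) := by rw [← sum_mulVec, hpart, one_mulVec]
    _ = F := add_sub_cancel _ _

/-- Preprocessing, local corrections: let `A` be symmetric positive definite, `B` real
`m × n`, `F ∈ ℝ^m`, `v̄ ∈ ℝ^n`. For `i = 1, …, N`, let `Pv i` and `Pp i` be local velocity
and pressure restriction matrices with (i) the local saddle-point matrices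
`L_i = [[Pv i * A * (Pv i)ᵀ, Pv i * Bᵀ * (Pp i)ᵀ],[Pp i * B * (Pv i)ᵀ, 0]]` invertible,
(ii) partition of unity `∑ i, (Pp i)ᵀ * Pp i = 1`, and (iii) locality
`B * (Pv i)ᵀ = (Pp i)ᵀ * Pp i * (B * (Pv i)ᵀ)`. With
`(u_i, q_i) = L_i⁻¹ (Pv i *ᵥ (-(A *ᵥ v̄)), Pp i *ᵥ (F - B *ᵥ v̄))` and
`v̄_i = (Pv i)ᵀ *ᵥ u_i`, one has `B (v̄ + v̄_1 + ⋯ + v̄_N) = F`. -/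
theorem preprocessing_flux_exact {n m N : ℕ}
    (A : Matrix (Fin n) (Fin n) ℝ) (B : Matrix (Fin m) (Fin n) ℝ)
    (hA_symm : A.IsSymm) (hA_pd : A.PosDef)
    (F : Fin m → ℝ) (vbar : Fin n → ℝ)
    (ni mi : Fin N → ℕ)
    (Pv : ∀ i, Matrix (Fin (ni i)) (Fin n) ℝ)
    (Pp : ∀ i, Matrix (Fin (mi i)) (Fin m) ℝ)
    (L : ∀ i, Matrix (Fin (ni i) ⊕ Fin (mi i)) (Fin (ni i) ⊕ Fin (mi i)) ℝ)
    (hL : ∀ i, L i = Matrix.fromBlocks (Pv i * A * (Pv i)ᵀ) (Pv i * Bᵀ * (Pp i)ᵀ)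
      (Pp i * B * (Pv i)ᵀ) (0 : Matrix (Fin (mi i)) (Fin (mi i)) ℝ))
    (hinv : ∀ i, IsUnit (L i))
    (hpart : ∑ i, (Pp i)ᵀ * Pp i = (1 : Matrix (Fin m) (Fin m) ℝ))
    (hloc : ∀ i, B * (Pv i)ᵀ = (Pp i)ᵀ * Pp i * (B * (Pv i)ᵀ))
    (u : ∀ i, Fin (ni i) → ℝ)
    (hu : ∀ i, u i = fun j =>
      ((L i)⁻¹ *ᵥ Sum.elim (Pv i *ᵥ (-(A *ᵥ vbar))) (Pp i *ᵥ (F - B *ᵥ vbar))) (Sum.inl j)) :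
    B *ᵥ (vbar + ∑ i, (Pv i)ᵀ *ᵥ u i) = F :=
  preprocessing_flux_exact_general A B F vbar ni mi Pv Pp L hL hinv hpart hloc u hu
end
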